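/- Let G = (V, w) be a weighted graph and ℒ ⊆ ℳ(G) a maximal cross-free subfamily of the minimum cuts of G (every mincut not in ℒ crosses some member of ℒ). Then span{χ(S) : S ∈ ℒ} = span{χ(S) : S ∈ ℳ(G)}. -/

import Mathlib

open Finset

/-- Two finite sets overlap if their intersection and both differences are nonempty. -/
def overlap {V : Type*} [DecidableEq V] (X Y : Finset V) : Prop :=
  (X ∩ Y).Nonempty ∧ (X \ Y).Nonempty ∧ (Y \ X).Nonempty

/-- Two shores cross if all four corner sets are nonempty. -/
def crossing {V : Type*} [DecidableEq V] [Fintype V] (X Y : Finset V) : Prop :=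
  (X ∩ Y).Nonempty ∧ (X \ Y).Nonempty ∧ (Y \ X).Nonempty ∧ (Xᶜ ∩ Yᶜ).Nonempty

/-- X is the shore of a cut: nonempty and proper. -/
def isCutShore {V : Type*} [Fintype V] (X : Finset V) : Prop :=
  X.Nonempty ∧ X ≠ Finset.univ

/-- The weight of the cut Δ(X) in the weighted graph with (symmetric) weights w. -/
noncomputable def cutWeight {V : Type*} [DecidableEq V] [Fintype V]
    (w : V → V → ℝ) (X : Finset V) : ℝ :=
  (1/2) * ∑ p : V × V,
    if (p.1 ∈ X ∧ p.2 ∉ X) ∨ (p.2 ∈ X ∧ p.1 ∉ X) then w p.1 p.2 else 0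

/-- Δ(X) is a minimum cut. -/
def isMinCut {V : Type*} [DecidableEq V] [Fintype V] (w : V → V → ℝ) (X : Finset V) : Prop :=
  isCutShore X ∧ ∀ Y : Finset V, isCutShore Y → cutWeight w X ≤ cutWeight w Y

/-- The characteristic vector of the cut Δ(X) among the edges (pairs of positive weight). -/
noncomputable def cutVec {V : Type*} [DecidableEq V] [Fintype V]
    (w : V → V → ℝ) (X : Finset V) : V × V → ℝ :=
  fun p => if (((p.1 ∈ X ∧ p.2 ∉ X) ∨ (p.2 ∈ X ∧ p.1 ∉ X)) ∧ 0 < w p.1 p.2) then 1 else 0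

/-!
Induction on the number of members of `L` that cross a minimum cut `X`. If neither `X` nor `Xᶜ`
lies in `L`, then `X` crosses some `Y ∈ L`. Submodularity of the cut weight makes `X ∩ Y` and
`X ∪ Y` minimum cuts with no positive-weight edge between `X \ Y` and `Y \ X`, so
`χ(X) = χ(X ∩ Y) + χ(X ∪ Y) - χ(Y)`. A member of `L` crossing `X ∩ Y` or `X ∪ Y` also crosses `X`,
because it does not cross `Y`, and `Y` itself crosses neither; so both cross fewer members of `L`.
-/

section

variable {V : Type*} [DecidableEq V] [Fintype V]

lemma crossing_iff {X Y : Finset V} : crossing X Y ↔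
    (∃ x, x ∈ X ∧ x ∈ Y) ∧ (∃ x, x ∈ X ∧ x ∉ Y) ∧ (∃ x, x ∈ Y ∧ x ∉ X) ∧
      (∃ x, x ∉ X ∧ x ∉ Y) := by
  simp [crossing, Finset.Nonempty]

lemma crossing_compl_compl {X Y : Finset V} : crossing Xᶜ Yᶜ ↔ crossing X Y := by
  simp only [crossing_iff, mem_compl, not_not]
  tauto

lemma crossing_of_crossing_inter {X Y Z : Finset V} (hXY : crossing X Y) (hZY : ¬ crossing Z Y)
    (h : crossing (X ∩ Y) Z) : crossing X Z := by
  -- `Z` meets both `Y` and `Yᶜ` without crossing `Y`, hence `Z ⊆ Y` or `Y ∪ Z = univ`.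
  simp only [crossing_iff, mem_inter] at *
  grind

lemma crossing_of_crossing_union {X Y Z : Finset V} (hXY : crossing X Y) (hZY : ¬ crossing Z Y)
    (h : crossing (X ∪ Y) Z) : crossing X Z := by
  rw [← crossing_compl_compl] at hXY hZY h ⊢
  rw [compl_union] at h
  exact crossing_of_crossing_inter hXY hZY h

lemma not_crossing_inter_right (X Y : Finset V) : ¬ crossing (X ∩ Y) Y := by
  simp [crossing_iff]

lemma not_crossing_union_right (X Y : Finset V) : ¬ crossing (X ∪ Y) Y := by
  simp only [crossing_iff, mem_union]
  grind

lemma crossing.isCutShore_inter {X Y : Finset V} (h : crossing X Y) : isCutShore (X ∩ Y) := by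
  obtain ⟨hXY, ⟨x, hx⟩, -, -⟩ := h
  exact ⟨hXY, fun huniv => (mem_sdiff.mp hx).2 (mem_inter.mp (huniv ▸ mem_univ x)).2⟩

lemma crossing.isCutShore_union {X Y : Finset V} (h : crossing X Y) : isCutShore (X ∪ Y) := by
  obtain ⟨hXY, -, -, ⟨x, hx⟩⟩ := h
  refine ⟨hXY.mono (inter_subset_left.trans subset_union_left), fun huniv => ?_⟩
  rw [← compl_union, huniv, compl_univ] at hx
  exact notMem_empty x hx

noncomputable def crossWeight (w : V → V → ℝ) (X Y : Finset V) : ℝ :=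
  ∑ p : V × V,
    if (p.1 ∈ X \ Y ∧ p.2 ∈ Y \ X) ∨ (p.1 ∈ Y \ X ∧ p.2 ∈ X \ Y) then w p.1 p.2 else 0

lemma crossWeight_nonneg {w : V → V → ℝ} (hnn : ∀ i j, 0 ≤ w i j) (X Y : Finset V) :
    0 ≤ crossWeight w X Y :=
  sum_nonneg fun p _ => by split_ifs <;> simp [hnn]

lemma cutWeight_add_cutWeight (w : V → V → ℝ) (X Y : Finset V) :
    cutWeight w X + cutWeight w Y =
      cutWeight w (X ∩ Y) + cutWeight w (X ∪ Y) + crossWeight w X Y := by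
  simp only [cutWeight, crossWeight, mul_sum, ← sum_add_distrib]
  rw [← sub_eq_zero, ← sum_sub_distrib]
  refine sum_eq_zero fun p _ => ?_
  simp only [mem_inter, mem_union, mem_sdiff]
  by_cases p.1 ∈ X <;> by_cases p.1 ∈ Y <;> by_cases p.2 ∈ X <;> by_cases p.2 ∈ Y <;>
    simp [*] <;> ring

lemma crossing.isMinCut_inter_union {w : V → V → ℝ} (hnn : ∀ i j, 0 ≤ w i j) {X Y : Finset V}
    (hX : isMinCut w X) (hY : isMinCut w Y) (h : crossing X Y) :
    isMinCut w (X ∩ Y) ∧ isMinCut w (X ∪ Y) ∧ crossWeight w X Y = 0 := by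
  have hinter := hX.2 _ h.isCutShore_inter
  have hunion := hX.2 _ h.isCutShore_union
  have hXY := hX.2 _ hY.1
  have hYX := hY.2 _ hX.1
  have hsub := cutWeight_add_cutWeight w X Y
  have hcross := crossWeight_nonneg hnn X Y
  refine ⟨⟨h.isCutShore_inter, fun Z hZ => ?_⟩, ⟨h.isCutShore_union, fun Z hZ => ?_⟩, ?_⟩
  · linarith [hX.2 Z hZ]
  · linarith [hX.2 Z hZ]
  · linarith

lemma cutVec_add_cutVec {w : V → V → ℝ} (hnn : ∀ i j, 0 ≤ w i j) {X Y : Finset V}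
    (h : crossWeight w X Y = 0) :
    cutVec w X + cutVec w Y = cutVec w (X ∩ Y) + cutVec w (X ∪ Y) := by
  have hzero := (sum_eq_zero_iff_of_nonneg fun p _ => by split_ifs <;> simp [hnn]).mp h
  funext p
  by_cases hw : 0 < w p.1 p.2
  · have hp := hzero p (mem_univ p)
    simp only [mem_sdiff] at hp
    simp only [Pi.add_apply, cutVec, hw, and_true, mem_inter, mem_union]
    by_cases p.1 ∈ X <;> by_cases p.1 ∈ Y <;> by_cases p.2 ∈ X <;> by_cases p.2 ∈ Y <;>
      simp_all
  · simp [cutVec, hw]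

lemma cutVec_compl (w : V → V → ℝ) (X : Finset V) : cutVec w Xᶜ = cutVec w X := by
  funext p
  simp only [cutVec, mem_compl, not_not]
  congr 2
  exact propext (by tauto)

lemma crossing_inter_subset {L : Set (Finset V)} {X Y : Finset V}
    (hY : ∀ Z ∈ L, ¬ crossing Z Y) (hXY : crossing X Y) :
    {Z ∈ L | crossing (X ∩ Y) Z} ⊆ {Z ∈ L | crossing X Z} \ {Y} := by
  rintro Z ⟨hZL, hZ⟩
  refine ⟨⟨hZL, crossing_of_crossing_inter hXY (hY Z hZL) hZ⟩, ?_⟩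
  rintro rfl
  exact not_crossing_inter_right X Z hZ

lemma crossing_union_subset {L : Set (Finset V)} {X Y : Finset V}
    (hY : ∀ Z ∈ L, ¬ crossing Z Y) (hXY : crossing X Y) :
    {Z ∈ L | crossing (X ∪ Y) Z} ⊆ {Z ∈ L | crossing X Z} \ {Y} := by
  rintro Z ⟨hZL, hZ⟩
  refine ⟨⟨hZL, crossing_of_crossing_union hXY (hY Z hZL) hZ⟩, ?_⟩
  rintro rfl
  exact not_crossing_union_right X Z hZ

open Submodule in
lemma cutVec_mem_span_of_maximal_crossFree {w : V → V → ℝ} (hnn : ∀ i j, 0 ≤ w i j)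
    {L : Set (Finset V)} (hL : ∀ X ∈ L, isMinCut w X)
    (hcrossfree : ∀ X ∈ L, ∀ Y ∈ L, ¬ crossing X Y)
    (hmax : ∀ X : Finset V, isMinCut w X → X ∉ L → Xᶜ ∉ L → ∃ Y ∈ L, crossing X Y)
    {X : Finset V} (hX : isMinCut w X) : cutVec w X ∈ span ℝ (cutVec w '' L) := by
  induction hn : {Z ∈ L | crossing X Z}.ncard using Nat.strong_induction_on generalizing X with
  | _ n ih =>
  by_cases hXL : X ∈ L
  · exact subset_span ⟨X, hXL, rfl⟩
  by_cases hXcL : Xᶜ ∈ L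
  · rw [← cutVec_compl]
    exact subset_span ⟨Xᶜ, hXcL, rfl⟩
  obtain ⟨Y, hYL, hXY⟩ := hmax X hX hXL hXcL
  have hY : ∀ Z ∈ L, ¬ crossing Z Y := fun Z hZL => hcrossfree Z hZL Y hYL
  obtain ⟨hinter, hunion, hzero⟩ := hXY.isMinCut_inter_union hnn hX (hL Y hYL)
  have hfewer : ({Z ∈ L | crossing X Z} \ {Y}).ncard < n :=
    hn ▸ Set.ncard_sdiff_singleton_lt_of_mem ⟨hYL, hXY⟩ (Set.toFinite _)
  have hmem_inter := ih _
    ((Set.ncard_le_ncard (crossing_inter_subset hY hXY) (Set.toFinite _)).trans_lt hfewer)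
    hinter rfl
  have hmem_union := ih _
    ((Set.ncard_le_ncard (crossing_union_subset hY hXY) (Set.toFinite _)).trans_lt hfewer)
    hunion rfl
  rw [eq_sub_of_add_eq (cutVec_add_cutVec hnn hzero)]
  exact sub_mem (add_mem hmem_inter hmem_union) (subset_span ⟨Y, hYL, rfl⟩)

end

theorem stmt13_general {V : Type*} [DecidableEq V] [Fintype V] (w : V → V → ℝ)
    (hnn : ∀ i j, 0 ≤ w i j)
    (L : Set (Finset V)) (hL : ∀ X ∈ L, isMinCut w X)
    (hcrossfree : ∀ X ∈ L, ∀ Y ∈ L, ¬ crossing X Y)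
    (hmax : ∀ X : Finset V, isMinCut w X → X ∉ L → Xᶜ ∉ L → ∃ Y ∈ L, crossing X Y) :
    Submodule.span ℝ (cutVec w '' L) =
      Submodule.span ℝ {v : V × V → ℝ | ∃ X : Finset V, isMinCut w X ∧ v = cutVec w X} := by
  refine le_antisymm (Submodule.span_mono ?_) (Submodule.span_le.mpr ?_)
  · rintro v ⟨X, hXL, rfl⟩
    exact ⟨X, hL X hXL, rfl⟩
  · rintro v ⟨X, hX, rfl⟩
    exact cutVec_mem_span_of_maximal_crossFree hnn hL hcrossfree hmax hX

/-- Jain's spanning lemma: a maximal cross-free subfamily of the minimum cuts spans the same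
space as all the minimum cuts. -/
theorem stmt13 {V : Type*} [DecidableEq V] [Fintype V] (w : V → V → ℝ)
    (hsym : ∀ i j, w i j = w j i) (hnn : ∀ i j, 0 ≤ w i j)
    (L : Set (Finset V)) (hL : ∀ X ∈ L, isMinCut w X)
    (hcrossfree : ∀ X ∈ L, ∀ Y ∈ L, ¬ crossing X Y)
    (hmax : ∀ X : Finset V, isMinCut w X → X ∉ L → Xᶜ ∉ L → ∃ Y ∈ L, crossing X Y) :
    Submodule.span ℝ (cutVec w '' L) =
      Submodule.span ℝ {v : V × V → ℝ | ∃ X : Finset V, isMinCut w X ∧ v = cutVec w X} :=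
  stmt13_general w hnn L hL hcrossfree hmax
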